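/- arXiv:2511.09144 — 2 statements merged into one kernel-verified Lean document; each statement's English description precedes it below -/
import Mathlib

section
/- For all real x₁, x₂ ≥ 0: (1 + x₁)(exp(-x₁) - 1/2) + (1 + x₂)(exp(-x₂) - 1/2) ≤ (1 + x₁ + x₂)·exp(-x₁ - x₂). -/
theorem matern_key_estimate (x₁ x₂ : ℝ) (h₁ : 0 ≤ x₁) (h₂ : 0 ≤ x₂) :
    (1 + x₁) * (Real.exp (-x₁) - 1 / 2) + (1 + x₂) * (Real.exp (-x₂) - 1 / 2) ≤
      (1 + x₁ + x₂) * Real.exp (-x₁ - x₂) := by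
  set a := Real.exp (-x₁) with ha
  set b := Real.exp (-x₂) with hb
  have hab : Real.exp (-x₁ - x₂) = a * b := by
    rw [ha, hb, ← Real.exp_add]; ring_nf
  have ha1 : a ≤ 1 := Real.exp_le_one_iff.mpr (by linarith)
  have hb1 : b ≤ 1 := Real.exp_le_one_iff.mpr (by linarith)
  have hap : 0 < a := Real.exp_pos _
  have hbp : 0 < b := Real.exp_pos _
  have hcheb : 0 ≤ (x₂ - x₁) * (a - b) := by
    rcases le_total x₁ x₂ with h | h
    · have : b ≤ a := Real.exp_le_exp.mpr (by linarith)
      nlinarith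
    · have : a ≤ b := Real.exp_le_exp.mpr (by linarith)
      nlinarith
  rw [hab]
  nlinarith [mul_nonneg (sub_nonneg.mpr ha1) (sub_nonneg.mpr hb1),
    mul_nonneg (add_nonneg h₁ h₂) (mul_pos hap hbp).le]
end

section
/- Let l > 0 and define the Matérn-3/2 kernel K(s,t) = (1 + √3‖s-t‖/l)·exp(-√3‖s-t‖/l) on ℝ^n, the distance d(s,t)² = 2 - 2K(s,t), and the modified quantity d'(s,t)² = 2 - 2K'(s,t) where K'(s,t) = (1 + √3‖s-t‖/l)·(exp(-√3‖s-t‖/l) - 1/2). Then for all s, t, u: d(s,u)² ≤ d'(s,t)² + d'(t,u)² - 2. -/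
/-! Write `f x = (1 + x) * exp (-x)` and `a, b, c` for the scaled distances `√3‖s - t‖ / l`,
`√3‖t - u‖ / l`, `√3‖s - u‖ / l`. Unfolding the definitions, the claim is
`f a + f b ≤ f c + 1 + (a + b) / 2`. Since `1 + x ≤ exp x`, both `f a` and `f b` are at most `1`;
since `x * exp (-x) ≤ exp (-1) < 1 / 2`, the function `f x + x / 2` is monotone, so
`f c ≥ 1 - c / 2`; and `c ≤ a + b` by the triangle inequality. -/

namespace Real

theorem one_add_mul_exp_neg_le_one (x : ℝ) : (1 + x) * exp (-x) ≤ 1 :=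
  calc (1 + x) * exp (-x) ≤ exp x * exp (-x) := by gcongr; linarith [add_one_le_exp x]
  _ = 1 := by rw [← exp_add, add_neg_cancel, exp_zero]

theorem hasDerivAt_one_add_mul_exp_neg (x : ℝ) :
    HasDerivAt (fun y => (1 + y) * exp (-y)) (-(x * exp (-x))) x :=
  (((hasDerivAt_id' x).const_add 1).mul (hasDerivAt_neg x).exp).congr_deriv (by ring)

theorem monotone_one_add_mul_exp_neg_add_half :
    Monotone fun x => (1 + x) * exp (-x) + x / 2 :=
  monotone_of_hasDerivAt_nonneg
    (fun x => (hasDerivAt_one_add_mul_exp_neg x).add ((hasDerivAt_id x).div_const 2))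
    fun x => by
      show 0 ≤ -(x * exp (-x)) + 1 / 2
      linarith [mul_exp_neg_le_exp_neg_one x, exp_neg_one_lt_half]

theorem one_sub_half_le_one_add_mul_exp_neg {x : ℝ} (hx : 0 ≤ x) :
    1 - x / 2 ≤ (1 + x) * exp (-x) := by
  have h := monotone_one_add_mul_exp_neg_add_half hx
  simp only [neg_zero, exp_zero, mul_one, zero_div, add_zero] at h
  linarith

end Real

theorem matern_chaining_distance_bound (n : ℕ) (l : ℝ) (hl : 0 < l)
    (K K' : EuclideanSpace ℝ (Fin n) → EuclideanSpace ℝ (Fin n) → ℝ)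
    (hK : ∀ s t, K s t =
      (1 + Real.sqrt 3 * ‖s - t‖ / l) * Real.exp (-(Real.sqrt 3 * ‖s - t‖ / l)))
    (hK' : ∀ s t, K' s t =
      (1 + Real.sqrt 3 * ‖s - t‖ / l) *
        (Real.exp (-(Real.sqrt 3 * ‖s - t‖ / l)) - 1 / 2))
    (d d' : EuclideanSpace ℝ (Fin n) → EuclideanSpace ℝ (Fin n) → ℝ)
    (hd : ∀ s t, d s t ^ 2 = 2 - 2 * K s t)
    (hd' : ∀ s t, d' s t ^ 2 = 2 - 2 * K' s t) :
    ∀ s t u, d s u ^ 2 ≤ d' s t ^ 2 + d' t u ^ 2 - 2 := by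
  intro s t u
  rw [hd, hd', hd', hK, hK', hK']
  set a := Real.sqrt 3 * ‖s - t‖ / l
  set b := Real.sqrt 3 * ‖t - u‖ / l
  set c := Real.sqrt 3 * ‖s - u‖ / l
  have hc : 0 ≤ c := by positivity
  have hcab : c ≤ a + b := by
    rw [← add_div, ← mul_add]
    gcongr _ * ?_ / _
    exact norm_sub_le_norm_sub_add_norm_sub s t u
  linarith [Real.one_add_mul_exp_neg_le_one a, Real.one_add_mul_exp_neg_le_one b,
    Real.one_sub_half_le_one_add_mul_exp_neg hc]
end
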